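/- arXiv:0811.0210 — 4 statements merged into one kernel-verified Lean document; each statement's English description precedes it below -/
import Mathlib

section
/- Let N be a positive integer, x : Fin N → ℝ, and let a*, a : Fin N → ℝ take values in [0,1]. Suppose Σ_n a*_n = p*·N with p* > 0, and let μ* := (Σ_n a*_n x_n)/(Σ_n a*_n). Let ε₁, ε₂ > 0 with ε₁ < p*, and assume |Σ_n a_n − Σ_n a*_n| ≤ ε₁·N and |Σ_n a_n x_n − Σ_n a*_n x_n| ≤ ε₂·N. Then Σ_n a_n > 0, and the weighted mean μ := (Σ_n a_n x_n)/(Σ_n a_n) satisfies |μ − μ*| ≤ (ε₂ + ε₁·|μ*|)/(p* − ε₁). -/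
/-
Writing μ* = T'/S', the identity T/S - μ* = ((T - T') + μ* (S' - S)) / S bounds the error of the
mean by the errors of numerator and denominator, while the denominator stays above
S' - δ₁ = (p* - ε₁) N.
-/

theorem abs_div_sub_div_le_of_abs_sub_le {K : Type*} [Field K] [LinearOrder K]
    [IsStrictOrderedRing K] {S S' T T' δ₁ δ₂ : K} (hpos : 0 < S' - δ₁)
    (h₁ : |S - S'| ≤ δ₁) (h₂ : |T - T'| ≤ δ₂) :
    |T / S - T' / S'| ≤ (δ₂ + δ₁ * |T' / S'|) / (S' - δ₁) := by
  have hS_ge : S' - δ₁ ≤ S := sub_le_of_abs_sub_le_left h₁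
  have hS : 0 < S := hpos.trans_le hS_ge
  have hS' : 0 < S' := by linarith [(abs_nonneg (S - S')).trans h₁]
  set μ := T' / S'
  have hT' : T' = μ * S' := (div_mul_cancel₀ T' hS'.ne').symm
  have hsplit : T / S - μ = ((T - T') + μ * (S' - S)) / S := by
    rw [hT']; field_simp; ring
  have hnum : |(T - T') + μ * (S' - S)| ≤ δ₂ + δ₁ * |μ| :=
    calc |(T - T') + μ * (S' - S)| ≤ |T - T'| + |μ| * |S - S'| := by
          rw [abs_sub_comm S S', ← abs_mul]
          exact abs_add_le _ _
      _ ≤ δ₂ + |μ| * δ₁ := by gcongr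
      _ = δ₂ + δ₁ * |μ| := by ring
  rw [hsplit, abs_div, abs_of_pos hS]
  exact div_le_div₀ ((abs_nonneg _).trans hnum) hnum hpos hS_ge

theorem weighted_mean_stability_general
    (N : ℕ) (hN : 0 < N) (x aStar a : Fin N → ℝ)
    (pStar : ℝ)
    (hsum : ∑ n, aStar n = pStar * N)
    (ε₁ ε₂ : ℝ) (hε₁p : ε₁ < pStar)
    (h1 : |(∑ n, a n) - ∑ n, aStar n| ≤ ε₁ * N)
    (h2 : |(∑ n, a n * x n) - ∑ n, aStar n * x n| ≤ ε₂ * N) :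
    0 < ∑ n, a n ∧
      |(∑ n, a n * x n) / (∑ n, a n)
          - (∑ n, aStar n * x n) / (∑ n, aStar n)|
        ≤ (ε₂ + ε₁ * |(∑ n, aStar n * x n) / (∑ n, aStar n)|) / (pStar - ε₁) := by
  have hN' : (0 : ℝ) < N := Nat.cast_pos.mpr hN
  have hdenom : (∑ n, aStar n) - ε₁ * N = (pStar - ε₁) * N := by rw [hsum]; ring
  have hpos : 0 < (∑ n, aStar n) - ε₁ * N := hdenom ▸ mul_pos (sub_pos.mpr hε₁p) hN'
  refine ⟨hpos.trans_le (sub_le_of_abs_sub_le_left h1), ?_⟩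
  refine (abs_div_sub_div_le_of_abs_sub_le hpos h1 h2).trans_eq ?_
  rw [hdenom, mul_right_comm ε₁, ← add_mul, mul_div_mul_right _ _ hN'.ne']

/-- Quantitative stability of the weighted mean under perturbation of weights
(paper's Lemma 2, mean part). -/
theorem weighted_mean_stability
    (N : ℕ) (hN : 0 < N) (x aStar a : Fin N → ℝ)
    (haStar : ∀ n, aStar n ∈ Set.Icc (0 : ℝ) 1)
    (ha : ∀ n, a n ∈ Set.Icc (0 : ℝ) 1)
    (pStar : ℝ) (hpStar : 0 < pStar)
    (hsum : ∑ n, aStar n = pStar * N)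
    (ε₁ ε₂ : ℝ) (hε₁ : 0 < ε₁) (hε₂ : 0 < ε₂) (hε₁p : ε₁ < pStar)
    (h1 : |(∑ n, a n) - ∑ n, aStar n| ≤ ε₁ * N)
    (h2 : |(∑ n, a n * x n) - ∑ n, aStar n * x n| ≤ ε₂ * N) :
    0 < ∑ n, a n ∧
      |(∑ n, a n * x n) / (∑ n, a n)
          - (∑ n, aStar n * x n) / (∑ n, aStar n)|
        ≤ (ε₂ + ε₁ * |(∑ n, aStar n * x n) / (∑ n, aStar n)|) / (pStar - ε₁) :=
  weighted_mean_stability_general N hN x aStar a pStar hsum ε₁ ε₂ hε₁p h1 h2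
end

section
/- Let N be a positive integer, x : Fin N → ℝ, and let a*, a : Fin N → ℝ take values in [0,1]. Suppose Σ_n a*_n = p*·N with p* > 0; let μ* := (Σ_n a*_n x_n)/(Σ_n a*_n) and (σ*)² := (Σ_n a*_n (x_n − μ*)²)/(Σ_n a*_n). Let ε₁, ε₂, ε₃ > 0 with ε₁ < p*, and assume |Σ_n a_n − Σ_n a*_n| ≤ ε₁·N, |Σ_n a_n x_n − Σ_n a*_n x_n| ≤ ε₂·N, and |Σ_n a_n (x_n − μ*)² − Σ_n a*_n (x_n − μ*)²| ≤ ε₃·N. Then Σ_n a_n > 0, and with μ := (Σ_n a_n x_n)/(Σ_n a_n) and σ² := (Σ_n a_n (x_n − μ)²)/(Σ_n a_n) one has |σ² − (σ*)²| ≤ (ε₃ + (σ*)²·ε₁)/(p* − ε₁) + ((ε₂ + ε₁·|μ*|)/(p* − ε₁))². -/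
open Finset

/-- Quantitative stability of the weighted variance under perturbation of weights
(paper's Lemma 2, variance part). -/
theorem weighted_variance_stability
    (N : ℕ) (hN : 0 < N) (x aStar a : Fin N → ℝ)
    (haStar : ∀ n, aStar n ∈ Set.Icc (0 : ℝ) 1)
    (ha : ∀ n, a n ∈ Set.Icc (0 : ℝ) 1)
    (pStar : ℝ) (hpStar : 0 < pStar)
    (hsum : ∑ n, aStar n = pStar * N)
    (muStar sigmaStarSq : ℝ)
    (hmuStar : muStar = (∑ n, aStar n * x n) / (∑ n, aStar n))
    (hsigmaStar : sigmaStarSq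
      = (∑ n, aStar n * (x n - muStar) ^ 2) / (∑ n, aStar n))
    (ε₁ ε₂ ε₃ : ℝ) (hε₁ : 0 < ε₁) (hε₂ : 0 < ε₂) (hε₃ : 0 < ε₃)
    (hε₁p : ε₁ < pStar)
    (h1 : |(∑ n, a n) - ∑ n, aStar n| ≤ ε₁ * N)
    (h2 : |(∑ n, a n * x n) - ∑ n, aStar n * x n| ≤ ε₂ * N)
    (h3 : |(∑ n, a n * (x n - muStar) ^ 2)
            - ∑ n, aStar n * (x n - muStar) ^ 2| ≤ ε₃ * N) :
    0 < ∑ n, a n ∧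
      (let mu := (∑ n, a n * x n) / (∑ n, a n)
       let sigmaSq := (∑ n, a n * (x n - mu) ^ 2) / (∑ n, a n)
       |sigmaSq - sigmaStarSq|
         ≤ (ε₃ + sigmaStarSq * ε₁) / (pStar - ε₁)
           + ((ε₂ + ε₁ * |muStar|) / (pStar - ε₁)) ^ 2) := by
  have hNpos : (0:ℝ) < N := by exact_mod_cast hN
  set S : ℝ := ∑ n, a n with hS
  set SStar : ℝ := ∑ n, aStar n with hSStarDef
  set T : ℝ := ∑ n, a n * (x n - muStar)^2 with hT
  set TStar : ℝ := ∑ n, aStar n * (x n - muStar)^2 with hTStarDef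
  have hSStarpos : 0 < SStar := by rw [hsum]; positivity
  have hc : 0 < pStar - ε₁ := by linarith
  have hScN : (pStar - ε₁) * N ≤ S := by
    have h1' := (abs_le.mp h1).1
    have : SStar = pStar * N := hsum
    nlinarith
  have hSpos : 0 < S := lt_of_lt_of_le (by positivity) hScN
  refine ⟨hSpos, ?_⟩
  intro mu sigmaSq
  have hmu : mu = (∑ n, a n * x n) / S := rfl
  have hax : ∑ n, a n * x n = mu * S := by
    rw [hmu]; field_simp
  have haxStar : ∑ n, aStar n * x n = muStar * SStar := by
    rw [hmuStar]; field_simp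
  have hTStar : TStar = sigmaStarSq * SStar := by
    rw [hsigmaStar]; field_simp
  have hTStarNonneg : 0 ≤ TStar := by
    apply Finset.sum_nonneg
    intro n _
    have := (haStar n).1
    positivity
  have hsigNonneg : 0 ≤ sigmaStarSq := by
    rw [hsigmaStar]
    exact div_nonneg hTStarNonneg hSStarpos.le
  -- shift identity
  have hshift : ∑ n, a n * (x n - mu)^2 = T - S * (mu - muStar)^2 := by
    have hexp : ∑ n, a n * (x n - mu)^2
        = ∑ n, (a n * (x n - muStar)^2 + (2*(muStar - mu)) * (a n * x n)
            + (mu^2 - muStar^2) * a n) := by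
      apply Finset.sum_congr rfl
      intro n _; ring
    rw [hexp, Finset.sum_add_distrib, Finset.sum_add_distrib,
      ← Finset.mul_sum, ← Finset.mul_sum, hax]
    ring
  have hsig : sigmaSq = T / S - (mu - muStar)^2 := by
    show (∑ n, a n * (x n - mu)^2) / S = _
    rw [hshift]
    field_simp
  -- bound on |mu - muStar|
  have hmudiff : mu - muStar = ((∑ n, a n * x n) - ∑ n, aStar n * x n
      + muStar * (SStar - S)) / S := by
    rw [haxStar, hax]
    field_simp
    ring
  have hmubound : |mu - muStar| ≤ (ε₂ + ε₁ * |muStar|) / (pStar - ε₁) := by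
    rw [hmudiff, abs_div, abs_of_pos hSpos]
    have hnum : |(∑ n, a n * x n) - (∑ n, aStar n * x n) + muStar * (SStar - S)|
        ≤ ε₂ * N + ε₁ * |muStar| * N := by
      have habs : |muStar * (SStar - S)| ≤ |muStar| * (ε₁ * N) := by
        rw [abs_mul]
        have : |SStar - S| ≤ ε₁ * N := by rw [abs_sub_comm]; exact h1
        exact mul_le_mul_of_nonneg_left this (abs_nonneg _)
      calc |(∑ n, a n * x n) - (∑ n, aStar n * x n) + muStar * (SStar - S)|
          ≤ |(∑ n, a n * x n) - (∑ n, aStar n * x n)| + |muStar * (SStar - S)| :=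
            abs_add_le _ _
        _ ≤ ε₂ * N + ε₁ * |muStar| * N := by linarith
    rw [div_le_div_iff₀ hSpos hc]
    have hnum0 : 0 ≤ ε₂ + ε₁ * |muStar| := by positivity
    calc |(∑ n, a n * x n) - (∑ n, aStar n * x n) + muStar * (SStar - S)| * (pStar - ε₁)
        ≤ ((ε₂ + ε₁ * |muStar|) * N) * (pStar - ε₁) := by
          apply mul_le_mul_of_nonneg_right _ hc.le
          linarith
      _ = (ε₂ + ε₁ * |muStar|) * ((pStar - ε₁) * N) := by ring
      _ ≤ (ε₂ + ε₁ * |muStar|) * S := mul_le_mul_of_nonneg_left hScN hnum0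
  -- bound on |T/S - sigmaStarSq|
  have hAbound : |T / S - sigmaStarSq| ≤ (ε₃ + sigmaStarSq * ε₁) / (pStar - ε₁) := by
    have hA : T / S - sigmaStarSq = ((T - TStar) + sigmaStarSq * (SStar - S)) / S := by
      rw [hTStar]
      field_simp
      ring
    rw [hA, abs_div, abs_of_pos hSpos]
    have hnum : |(T - TStar) + sigmaStarSq * (SStar - S)|
        ≤ ε₃ * N + sigmaStarSq * ε₁ * N := by
      have habs : |sigmaStarSq * (SStar - S)| ≤ sigmaStarSq * (ε₁ * N) := by
        rw [abs_mul, abs_of_nonneg hsigNonneg]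
        have : |SStar - S| ≤ ε₁ * N := by rw [abs_sub_comm]; exact h1
        exact mul_le_mul_of_nonneg_left this hsigNonneg
      calc |(T - TStar) + sigmaStarSq * (SStar - S)|
          ≤ |T - TStar| + |sigmaStarSq * (SStar - S)| := abs_add_le _ _
        _ ≤ ε₃ * N + sigmaStarSq * ε₁ * N := by linarith
    rw [div_le_div_iff₀ hSpos hc]
    have hnum0 : 0 ≤ ε₃ + sigmaStarSq * ε₁ := by positivity
    calc |(T - TStar) + sigmaStarSq * (SStar - S)| * (pStar - ε₁)
        ≤ ((ε₃ + sigmaStarSq * ε₁) * N) * (pStar - ε₁) := by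
          apply mul_le_mul_of_nonneg_right _ hc.le
          linarith
      _ = (ε₃ + sigmaStarSq * ε₁) * ((pStar - ε₁) * N) := by ring
      _ ≤ (ε₃ + sigmaStarSq * ε₁) * S := mul_le_mul_of_nonneg_left hScN hnum0
  -- combine
  have hsq : (mu - muStar)^2 ≤ ((ε₂ + ε₁ * |muStar|) / (pStar - ε₁))^2 := by
    rw [← sq_abs (mu - muStar)]
    exact pow_le_pow_left₀ (abs_nonneg _) hmubound 2
  calc |sigmaSq - sigmaStarSq| = |(T / S - sigmaStarSq) - (mu - muStar)^2| := by
        rw [hsig]; ring_nf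
    _ ≤ |T / S - sigmaStarSq| + |(mu - muStar)^2| := abs_sub _ _
    _ = |T / S - sigmaStarSq| + (mu - muStar)^2 := by rw [abs_of_nonneg (sq_nonneg (mu - muStar))]
    _ ≤ (ε₃ + sigmaStarSq * ε₁) / (pStar - ε₁)
          + ((ε₂ + ε₁ * |muStar|) / (pStar - ε₁)) ^ 2 := add_le_add hAbound hsq
end

section
/- Let N and J be positive integers, let V > 0, and let x₁,...,x_N be real numbers with x_n ∈ [0, V] for all n. Let a* be an N × J matrix with entries a*_{ni} ∈ [0,1], Σ_{i=1}^J a*_{ni} = 1 for every n, and Σ_{n=1}^N a*_{ni} > 0 for every i; set μ*_i := (Σ_n a*_{ni} x_n)/(Σ_n a*_{ni}). Let z₁,...,z_N be independent random variables taking values in {1,...,J} with ℙ(z_n = i) = a*_{ni}, and define a_{ni} := 1 if z_n = i and a_{ni} := 0 otherwise. Then for all ε₁, ε₂, ε₃ > 0, the probability that there exists some i ∈ {1,...,J} with |Σ_n a_{ni} − Σ_n a*_{ni}| > ε₁·N or |Σ_n a_{ni} x_n − Σ_n a*_{ni} x_n| > ε₂·N or |Σ_n a_{ni}(x_n − μ*_i)²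 − Σ_n a*_{ni}(x_n − μ*_i)²| > ε₃·N is at most 2J·exp(−2ε₁²N) + 2J·exp(−2ε₂²N/V²) + 2J·exp(−2ε₃²N/V⁴). -/
open Finset MeasureTheory ProbabilityTheory

/-! For a fixed class `i`, each of the three deviations is `∑ n, (1[z n = i] c n - a*_{ni} c n)`
with `c n = 1`, `x n` or `(x n - μ*_i)²`, a sum of independent centred variables with values in
an interval of length `C = 1`, `V` or `V²` (the last because `μ*_i` is a weighted mean of points of
`[0, V]`). Hoeffding's inequality bounds each two-sided tail by `2 exp (-2 ε² N / C²)`, and a union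
bound over the `3J` events gives the claim. -/

open Real
open scoped NNReal

namespace ProbabilityTheory.HasSubgaussianMGF

variable {Ω : Type*} {m : MeasurableSpace Ω} {μ : Measure Ω} [IsFiniteMeasure μ]

lemma measure_lt_abs_le {X : Ω → ℝ} {c : ℝ≥0} (h : HasSubgaussianMGF X c μ) {t : ℝ}
    (ht : 0 ≤ t) : μ {ω | t < |X ω|} ≤ ENNReal.ofReal (2 * exp (-t ^ 2 / (2 * c))) := by
  have h_tails : {ω | t < |X ω|} ⊆ {ω | t ≤ X ω} ∪ {ω | t ≤ (-X) ω} := fun ω (hω : t < |X ω|) ↦ by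
    rcases lt_abs.mp hω with h | h
    exacts [Or.inl h.le, Or.inr h.le]
  calc μ {ω | t < |X ω|}
      ≤ μ {ω | t ≤ X ω} + μ {ω | t ≤ (-X) ω} := (measure_mono h_tails).trans (measure_union_le _ _)
    _ = ENNReal.ofReal (μ.real {ω | t ≤ X ω}) + ENNReal.ofReal (μ.real {ω | t ≤ (-X) ω}) := by
      rw [ofReal_measureReal, ofReal_measureReal]
    _ ≤ ENNReal.ofReal (exp (-t ^ 2 / (2 * c))) + ENNReal.ofReal (exp (-t ^ 2 / (2 * c))) := by
      gcongr
      exacts [h.measure_ge_le ht, h.neg.measure_ge_le ht]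
    _ = ENNReal.ofReal (2 * exp (-t ^ 2 / (2 * c))) := by
      rw [← ENNReal.ofReal_add (by positivity) (by positivity), ← two_mul]

end ProbabilityTheory.HasSubgaussianMGF

section Hoeffding

variable {Ω ι : Type*} {m : MeasurableSpace Ω} {μ : Measure Ω} [IsProbabilityMeasure μ]

theorem measure_mul_card_lt_abs_sum_sub_integral_le {X : ι → Ω → ℝ} (h_indep : iIndepFun X μ)
    (h_meas : ∀ i, AEMeasurable (X i) μ) {a b : ℝ} (h_bdd : ∀ i, ∀ᵐ ω ∂μ, X i ω ∈ Set.Icc a b)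
    (s : Finset ι) {ε : ℝ} (hε : 0 ≤ ε) :
    μ {ω | ε * #s < |∑ i ∈ s, (X i ω - μ[X i])|}
      ≤ ENNReal.ofReal (2 * exp (-2 * ε ^ 2 * #s / (b - a) ^ 2)) := by
  have h_centered : iIndepFun (fun i ↦ (fun x ↦ x - μ[X i]) ∘ X i) μ :=
    h_indep.comp (fun i (x : ℝ) ↦ x - μ[X i]) fun _ ↦ measurable_id.sub_const _
  have h_sum := (HasSubgaussianMGF.sum_of_iIndepFun h_centered
    (fun i _ ↦ hasSubgaussianMGF_of_mem_Icc (h_meas i) (h_bdd i)) (s := s))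
  refine (h_sum.measure_lt_abs_le (by positivity)).trans_eq ?_
  congr 3
  rw [Finset.sum_const, nsmul_eq_mul]
  push_cast
  rw [Real.norm_eq_abs, div_pow, sq_abs]
  field_simp

variable {κ : Type*} [MeasurableSpace κ] [MeasurableSingletonClass κ] [DecidableEq κ]
  [Fintype ι]

theorem measure_mul_card_lt_abs_sum_indicator_mul_sub_le {z : ι → Ω → κ}
    (hz : ∀ n, Measurable (z n)) (h_indep : iIndepFun z μ) (k : κ) {p : ι → ℝ}
    (hp_nonneg : ∀ n, 0 ≤ p n) (hp : ∀ n, μ {ω | z n ω = k} = ENNReal.ofReal (p n))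
    {c : ι → ℝ} {C : ℝ} (hc : ∀ n, c n ∈ Set.Icc 0 C) {ε : ℝ} (hε : 0 ≤ ε) :
    μ {ω | ε * Fintype.card ι <
        |(∑ n, (if z n ω = k then (1 : ℝ) else 0) * c n) - ∑ n, p n * c n|}
      ≤ ENNReal.ofReal (2 * exp (-2 * ε ^ 2 * Fintype.card ι / C ^ 2)) := by
  set X : ι → Ω → ℝ := fun n ↦ (fun j ↦ (if j = k then (1 : ℝ) else 0) * c n) ∘ z n
  have h_meas_ind : Measurable fun j : κ ↦ if j = k then (1 : ℝ) else 0 :=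
    Measurable.ite (p := (· = k)) (measurableSet_singleton k) measurable_const measurable_const
  have hX_indep : iIndepFun X μ := h_indep.comp _ fun n ↦ h_meas_ind.mul_const (c n)
  have hX_bdd : ∀ n ω, X n ω ∈ Set.Icc 0 C := fun n ω ↦ by
    have hC : 0 ≤ C := (hc n).1.trans (hc n).2
    by_cases h : z n ω = k <;> simp [X, h, hc n, hC]
  have hX_mean : ∀ n, μ[X n] = p n * c n := fun n ↦ by
    have h_ind : (fun ω ↦ if z n ω = k then (1 : ℝ) else 0) = {ω | z n ω = k}.indicator 1 := by
      ext ω; simp [Set.indicator_apply]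
    have h_set : MeasurableSet {ω | z n ω = k} := hz n (measurableSet_singleton k)
    simp only [X, Function.comp_def, integral_mul_const, h_ind]
    rw [integral_indicator_one h_set, measureReal_def, hp, ENNReal.toReal_ofReal (hp_nonneg n)]
  have h_dev : ∀ ω, (∑ n, (if z n ω = k then (1 : ℝ) else 0) * c n) - ∑ n, p n * c n
      = ∑ n, (X n ω - μ[X n]) := fun ω ↦ by
    simp only [hX_mean, Finset.sum_sub_distrib]; rfl
  simp_rw [h_dev, ← Finset.card_univ]
  simpa only [sub_zero] using measure_mul_card_lt_abs_sum_sub_integral_le hX_indep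
    (fun n ↦ ((h_meas_ind.mul_const _).comp (hz n)).aemeasurable)
    (fun n ↦ ae_of_all μ (hX_bdd n)) univ hε

end Hoeffding

lemma measure_exists_or_or_le {Ω ι : Type*} {m : MeasurableSpace Ω} {μ : Measure Ω} [Fintype ι]
    {P Q R : ι → Ω → Prop} {a b c : ℝ} (ha : 0 ≤ a) (hb : 0 ≤ b) (hc : 0 ≤ c)
    (hP : ∀ i, μ {ω | P i ω} ≤ ENNReal.ofReal a) (hQ : ∀ i, μ {ω | Q i ω} ≤ ENNReal.ofReal b)
    (hR : ∀ i, μ {ω | R i ω} ≤ ENNReal.ofReal c) :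
    μ {ω | ∃ i, P i ω ∨ Q i ω ∨ R i ω}
      ≤ ENNReal.ofReal (Fintype.card ι * a + Fintype.card ι * b + Fintype.card ι * c) := by
  calc μ {ω | ∃ i, P i ω ∨ Q i ω ∨ R i ω}
      ≤ ∑ i, μ {ω | P i ω ∨ Q i ω ∨ R i ω} := by
        rw [Set.ofPred_exists]; exact measure_iUnion_fintype_le μ _
    _ ≤ ∑ _i : ι, (ENNReal.ofReal a + (ENNReal.ofReal b + ENNReal.ofReal c)) := by
        gcongr with i
        simp only [Set.ofPred_or]
        exact (measure_union_le _ _).trans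
          (add_le_add (hP i) ((measure_union_le _ _).trans (add_le_add (hQ i) (hR i))))
    _ = _ := by
        simp only [Finset.sum_const, Finset.card_univ, nsmul_eq_mul]
        rw [← ENNReal.ofReal_add hb hc, ← ENNReal.ofReal_add ha (by positivity),
          ← ENNReal.ofReal_natCast, ← ENNReal.ofReal_mul (by positivity)]
        ring_nf

lemma sum_mul_div_sum_mem_Icc {ι : Type*} (s : Finset ι) {w y : ι → ℝ} {V : ℝ} (hV : 0 ≤ V)
    (hw : ∀ n ∈ s, 0 ≤ w n) (hy : ∀ n ∈ s, y n ∈ Set.Icc 0 V) :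
    (∑ n ∈ s, w n * y n) / ∑ n ∈ s, w n ∈ Set.Icc 0 V := by
  have hsum : 0 ≤ ∑ n ∈ s, w n := sum_nonneg hw
  refine ⟨div_nonneg (sum_nonneg fun n hn ↦ mul_nonneg (hw n hn) (hy n hn).1) hsum,
    div_le_of_le_mul₀ hsum hV ?_⟩
  rw [mul_comm, Finset.sum_mul]
  exact sum_le_sum fun n hn ↦ mul_le_mul_of_nonneg_left (hy n hn).2 (hw n hn)

lemma sq_sub_le_sq_of_mem_Icc {a b V : ℝ} (ha : a ∈ Set.Icc 0 V) (hb : b ∈ Set.Icc 0 V) :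
    (a - b) ^ 2 ≤ V ^ 2 := by
  rw [← sq_abs]
  exact pow_le_pow_left₀ (abs_nonneg _) (abs_sub_le_of_nonneg_of_le ha.1 ha.2 hb.1 hb.2) 2

theorem rounded_scheme_typical_whp_general
    {Ω : Type*} [MeasurableSpace Ω] (μ : Measure Ω) [IsProbabilityMeasure μ]
    (N J : ℕ) (V : ℝ) (hV : 0 < V)
    (x : Fin N → ℝ) (hx : ∀ n, x n ∈ Set.Icc (0 : ℝ) V)
    (aStar : Fin N → Fin J → ℝ)
    (haStar : ∀ n i, aStar n i ∈ Set.Icc (0 : ℝ) 1)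
    (muStar : Fin J → ℝ)
    (hmuStar : ∀ i, muStar i = (∑ n, aStar n i * x n) / (∑ n, aStar n i))
    (z : Fin N → Ω → Fin J)
    (hmeas : ∀ n, Measurable (z n))
    (hindep : iIndepFun z μ)
    (hprob : ∀ n i, μ {ω | z n ω = i} = ENNReal.ofReal (aStar n i))
    (ε₁ ε₂ ε₃ : ℝ) (hε₁ : 0 < ε₁) (hε₂ : 0 < ε₂) (hε₃ : 0 < ε₃) :
    μ {ω | ∃ i : Fin J,
        ε₁ * N < |(∑ n, (if z n ω = i then (1 : ℝ) else 0)) - ∑ n, aStar n i| ∨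
        ε₂ * N < |(∑ n, (if z n ω = i then (1 : ℝ) else 0) * x n)
                    - ∑ n, aStar n i * x n| ∨
        ε₃ * N < |(∑ n, (if z n ω = i then (1 : ℝ) else 0) * (x n - muStar i) ^ 2)
                    - ∑ n, aStar n i * (x n - muStar i) ^ 2|}
      ≤ ENNReal.ofReal
          (2 * J * Real.exp (-2 * ε₁ ^ 2 * N)
            + 2 * J * Real.exp (-2 * ε₂ ^ 2 * N / V ^ 2)
            + 2 * J * Real.exp (-2 * ε₃ ^ 2 * N / V ^ 4)) := by
  have hmu : ∀ i, muStar i ∈ Set.Icc 0 V := fun i ↦ hmuStar i ▸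
    sum_mul_div_sum_mem_Icc univ hV.le (fun n _ ↦ (haStar n i).1) (fun n _ ↦ hx n)
  have hdev := fun (i : Fin J) {c : Fin N → ℝ} {C : ℝ} (hc : ∀ n, c n ∈ Set.Icc 0 C) {ε : ℝ}
      (hε : 0 ≤ ε) ↦ measure_mul_card_lt_abs_sum_indicator_mul_sub_le hmeas hindep i
    (p := fun n ↦ aStar n i) (fun n ↦ (haStar n i).1) (fun n ↦ hprob n i) hc hε
  simp only [Fintype.card_fin] at hdev
  refine (measure_exists_or_or_le (a := 2 * exp (-2 * ε₁ ^ 2 * N))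
    (b := 2 * exp (-2 * ε₂ ^ 2 * N / V ^ 2)) (c := 2 * exp (-2 * ε₃ ^ 2 * N / V ^ 4))
    (by positivity) (by positivity) (by positivity) (fun i ↦ ?_) (fun i ↦ hdev i hx hε₂.le)
    (fun i ↦ ?_)).trans_eq ?_
  · simpa only [mul_one, one_pow, div_one] using hdev i (c := fun _ ↦ 1) (C := 1)
      (fun _ ↦ ⟨zero_le_one, le_rfl⟩) hε₁.le
  · have hsq n : (x n - muStar i) ^ 2 ∈ Set.Icc 0 (V ^ 2) :=
      ⟨sq_nonneg _, sq_sub_le_sq_of_mem_Icc (hx n) (hmu i)⟩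
    simpa only [← pow_mul] using hdev i hsq hε₃.le
  · rw [Fintype.card_fin]; ring_nf

/-- Paper's Theorem 1: the probability that the randomly rounded classification
scheme is not (ε₁,ε₂,ε₃)-typical is at most
`2J exp(−2ε₁²N) + 2J exp(−2ε₂²N/V²) + 2J exp(−2ε₃²N/V⁴)`. -/
theorem rounded_scheme_typical_whp
    {Ω : Type*} [MeasurableSpace Ω] (μ : Measure Ω) [IsProbabilityMeasure μ]
    (N J : ℕ) (hN : 0 < N) (hJ : 0 < J) (V : ℝ) (hV : 0 < V)
    (x : Fin N → ℝ) (hx : ∀ n, x n ∈ Set.Icc (0 : ℝ) V)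
    (aStar : Fin N → Fin J → ℝ)
    (haStar : ∀ n i, aStar n i ∈ Set.Icc (0 : ℝ) 1)
    (hrow : ∀ n, ∑ i, aStar n i = 1)
    (hcol : ∀ i, 0 < ∑ n, aStar n i)
    (muStar : Fin J → ℝ)
    (hmuStar : ∀ i, muStar i = (∑ n, aStar n i * x n) / (∑ n, aStar n i))
    (z : Fin N → Ω → Fin J)
    (hmeas : ∀ n, Measurable (z n))
    (hindep : iIndepFun z μ)
    (hprob : ∀ n i, μ {ω | z n ω = i} = ENNReal.ofReal (aStar n i))
    (ε₁ ε₂ ε₃ : ℝ) (hε₁ : 0 < ε₁) (hε₂ : 0 < ε₂) (hε₃ : 0 < ε₃) :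
    μ {ω | ∃ i : Fin J,
        ε₁ * N < |(∑ n, (if z n ω = i then (1 : ℝ) else 0)) - ∑ n, aStar n i| ∨
        ε₂ * N < |(∑ n, (if z n ω = i then (1 : ℝ) else 0) * x n)
                    - ∑ n, aStar n i * x n| ∨
        ε₃ * N < |(∑ n, (if z n ω = i then (1 : ℝ) else 0) * (x n - muStar i) ^ 2)
                    - ∑ n, aStar n i * (x n - muStar i) ^ 2|}
      ≤ ENNReal.ofReal
          (2 * J * Real.exp (-2 * ε₁ ^ 2 * N)
            + 2 * J * Real.exp (-2 * ε₂ ^ 2 * N / V ^ 2)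
            + 2 * J * Real.exp (-2 * ε₃ ^ 2 * N / V ^ 4)) :=
  rounded_scheme_typical_whp_general μ N J V hV x hx aStar haStar muStar hmuStar z hmeas hindep
    hprob ε₁ ε₂ ε₃ hε₁ hε₂ hε₃
end

section
/- Let N and J be positive integers, let V > 0, and let x₁,...,x_N be real numbers with x_n ∈ [0, V] for all n. Let a* be an N × J matrix with entries a*_{ni} ∈ [0,1], Σ_{i=1}^J a*_{ni} = 1 for every n, and Σ_{n=1}^N a*_{ni} > 0 for every i; set μ*_i := (Σ_n a*_{ni} x_n)/(Σ_n a*_{ni}). Let ε₁, ε₂, ε₃ > 0 and suppose 2J·exp(−2ε₁²N) + 2J·exp(−2ε₂²N/V²) + 2J·exp(−2ε₃²N/V⁴) < 1. Then there exists a function z : {1,...,N} → {1,...,J} such that, with a_{ni} := 1 if z(n) = i and a_{ni} := 0 otherwise, for every i ∈ {1,...,J}: |Σ_n a_{ni} − Σ_n a*_{ni}| ≤ ε₁·N, |Σ_n a_{ni} x_n − Σ_n a*_{ni} x_n| ≤ ε₂·N, and |Σ_n a_{ni}(x_n − μ*_i)² − Σ_n a*_{ni}(x_n − μ*_i)²|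 ≤ ε₃·N. -/
/-!
Draw each `z n` independently from the `n`-th row of `a*`. For a fixed class `i`, each of the
three statistics of `z` is a sum of `N` independent terms with values in `[0, R]`, where
`R = 1`, `V`, `V²` (the last because `μ*ᵢ` is a weighted mean of the `xₙ`, hence in `[0, V]`),
and its expectation is the corresponding fractional statistic of `a*`. Hoeffding's inequality
bounds the probability of a deviation of at least `εN` by `2 exp (-2 ε² N / R²)`, so the
hypothesis says exactly that the union bound over the `3J` bad events is below one: some
scheme avoids all of them.
-/

open Finset MeasureTheory ProbabilityTheory

section Hoeffding

variable {ι : Type*} [Fintype ι] {Ω : ι → Type*} [∀ n, MeasurableSpace (Ω n)]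
  {μ : ∀ n, Measure (Ω n)} [∀ n, IsProbabilityMeasure (μ n)]

lemma measureReal_pi_sum_sub_integral_ge_le {f : ∀ n, Ω n → ℝ} (hf : ∀ n, Measurable (f n))
    {a b : ℝ} (hab : ∀ n y, f n y ∈ Set.Icc a b) {s : ℝ} (hs : 0 ≤ s) :
    (Measure.pi μ).real {ω | s ≤ ∑ n, (f n (ω n) - ∫ y, f n y ∂μ n)}
      ≤ Real.exp (-2 * s ^ 2 / (Fintype.card ι * (b - a) ^ 2)) := by
  have hX : ∀ n, Measurable fun ω : ∀ n, Ω n => f n (ω n) :=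
    fun n => (hf n).comp (measurable_pi_apply n)
  have hmean : ∀ n, (Measure.pi μ)[fun ω => f n (ω n)] = ∫ y, f n y ∂μ n :=
    fun n => integral_comp_eval (hf n).aestronglyMeasurable
  have hindep : iIndepFun (fun n ω => f n (ω n) - ∫ y, f n y ∂μ n) (Measure.pi μ) :=
    (iIndepFun_pi (μ := μ) fun n => (hf n).aemeasurable).comp _ fun n => measurable_id.sub_const _
  have hsub : ∀ n ∈ (univ : Finset ι),
      HasSubgaussianMGF (fun ω => f n (ω n) - ∫ y, f n y ∂μ n) ((‖b - a‖₊ / 2) ^ 2)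
        (Measure.pi μ) := fun n _ => by
    simpa only [hmean] using
      hasSubgaussianMGF_of_mem_Icc (μ := Measure.pi μ) (hX n).aemeasurable
        (ae_of_all _ fun ω => hab n (ω n))
  refine (HasSubgaussianMGF.measure_sum_ge_le_of_iIndepFun hindep hsub hs).trans_eq ?_
  congr 1
  push_cast
  rw [sum_const, card_univ, nsmul_eq_mul, div_pow, Real.norm_eq_abs, sq_abs]
  field_simp

lemma measureReal_pi_abs_sum_sub_integral_ge_le {f : ∀ n, Ω n → ℝ}
    (hf : ∀ n, Measurable (f n)) {a b : ℝ} (hab : ∀ n y, f n y ∈ Set.Icc a b) {s : ℝ}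
    (hs : 0 ≤ s) :
    (Measure.pi μ).real {ω | s ≤ |∑ n, (f n (ω n) - ∫ y, f n y ∂μ n)|}
      ≤ 2 * Real.exp (-2 * s ^ 2 / (Fintype.card ι * (b - a) ^ 2)) := by
  have hneg : ∀ n y, -f n y ∈ Set.Icc (-b) (-a) := fun n y => by
    simpa [and_comm] using hab n y
  have hsum_neg : ∀ ω : ∀ n, Ω n, ∑ n, (-f n (ω n) - ∫ y, -f n y ∂μ n)
      = -∑ n, (f n (ω n) - ∫ y, f n y ∂μ n) := fun ω => by
    simp only [integral_neg, ← sum_neg_distrib, neg_sub, sub_neg_eq_add, neg_add_eq_sub]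
  have hsplit : {ω : ∀ n, Ω n | s ≤ |∑ n, (f n (ω n) - ∫ y, f n y ∂μ n)|}
      ⊆ {ω | s ≤ ∑ n, (f n (ω n) - ∫ y, f n y ∂μ n)}
        ∪ {ω | s ≤ ∑ n, (-f n (ω n) - ∫ y, -f n y ∂μ n)} := fun ω hω => by
    simp only [Set.mem_union, Set.mem_ofPred_eq, hsum_neg]
    exact (le_abs'.1 hω).symm.imp_right le_neg_of_le_neg
  calc _ ≤ _ := measureReal_mono hsplit
    _ ≤ _ := measureReal_union_le _ _
    _ ≤ _ := add_le_add (measureReal_pi_sum_sub_integral_ge_le hf hab hs)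
        (measureReal_pi_sum_sub_integral_ge_le (fun n => (hf n).neg) hneg hs)
    _ = _ := by ring_nf

end Hoeffding

section RandomScheme

variable {ι κ : Type*} [Fintype κ] [MeasurableSpace κ] [DiscreteMeasurableSpace κ]
  (a : ι → κ → ℝ) (ha : ∀ n j, 0 ≤ a n j) (hrow : ∀ n, ∑ j, a n j = 1)

noncomputable def rowPMF (n : ι) : PMF κ :=
  PMF.ofFintype (fun j => ENNReal.ofReal (a n j)) <| by
    rw [← ENNReal.ofReal_sum_of_nonneg fun j _ => ha n j, hrow n, ENNReal.ofReal_one]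

lemma integral_rowPMF (n : ι) (g : κ → ℝ) :
    ∫ j, g j ∂(rowPMF a ha hrow n).toMeasure = ∑ j, a n j * g j := by
  simp [rowPMF, PMF.integral_eq_sum, ENNReal.toReal_ofReal (ha n _)]

noncomputable abbrev randomScheme [Fintype ι] : Measure (ι → κ) :=
  Measure.pi fun n => (rowPMF a ha hrow n).toMeasure

lemma measureReal_randomScheme_abs_sum_sub_ge_le [Fintype ι] [DecidableEq κ] (i : κ)
    {c : ι → ℝ} {R : ℝ} (hc : ∀ n, c n ∈ Set.Icc 0 R) {ε : ℝ} (hε : 0 ≤ ε) :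
    (randomScheme a ha hrow).real
        {z | ε * Fintype.card ι
          ≤ |∑ n, (if z n = i then (1 : ℝ) else 0) * c n - ∑ n, a n i * c n|}
      ≤ 2 * Real.exp (-2 * ε ^ 2 * Fintype.card ι / R ^ 2) := by
  have hf : ∀ n j, (if j = i then (1 : ℝ) else 0) * c n ∈ Set.Icc 0 R := fun n j => by
    obtain ⟨hc0, hcR⟩ := hc n
    split_ifs <;> simp [hc0, hcR, hc0.trans hcR]
  have key := measureReal_pi_abs_sum_sub_integral_ge_le
    (μ := fun n => (rowPMF a ha hrow n).toMeasure) (fun n => Measurable.of_discrete) hf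
    (s := ε * Fintype.card ι) (mul_nonneg hε (Nat.cast_nonneg _))
  have hmean : ∀ n,
      ∫ j, (if j = i then (1 : ℝ) else 0) * c n ∂(rowPMF a ha hrow n).toMeasure
        = a n i * c n := fun n => by
    simp [integral_rowPMF]
  simp only [hmean, sum_sub_distrib] at key
  convert key using 3
  rcases eq_or_ne (Fintype.card ι : ℝ) 0 with h | h
  · simp [h]
  · field_simp
    ring

end RandomScheme

lemma sq_sub_weightedMean_mem_Icc {ι : Type*} [Fintype ι] {w x : ι → ℝ} {V : ℝ}
    (hw : ∀ n, 0 ≤ w n) (hx : ∀ n, x n ∈ Set.Icc 0 V) (m : ι) :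
    (x m - (∑ n, w n * x n) / ∑ n, w n) ^ 2 ∈ Set.Icc 0 (V ^ 2) := by
  have hV : 0 ≤ V := (hx m).1.trans (hx m).2
  have hw_sum : 0 ≤ ∑ n, w n := sum_nonneg fun n _ => hw n
  have hmean_nonneg : 0 ≤ (∑ n, w n * x n) / ∑ n, w n :=
    div_nonneg (sum_nonneg fun n _ => mul_nonneg (hw n) (hx n).1) hw_sum
  have hmean_le : (∑ n, w n * x n) / ∑ n, w n ≤ V := by
    refine div_le_of_le_mul₀ hw_sum hV ?_
    rw [mul_sum]
    exact sum_le_sum fun n _ => by nlinarith [hw n, (hx n).2]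
  exact ⟨sq_nonneg _, sq_le_sq' (by linarith [(hx m).1]) (by linarith [(hx m).2])⟩

theorem exists_typical_scheme_general
    (N J : ℕ) (V : ℝ)
    (x : Fin N → ℝ) (hx : ∀ n, x n ∈ Set.Icc (0 : ℝ) V)
    (aStar : Fin N → Fin J → ℝ)
    (haStar : ∀ n i, aStar n i ∈ Set.Icc (0 : ℝ) 1)
    (hrow : ∀ n, ∑ i, aStar n i = 1)
    (muStar : Fin J → ℝ)
    (hmuStar : ∀ i, muStar i = (∑ n, aStar n i * x n) / (∑ n, aStar n i))
    (ε₁ ε₂ ε₃ : ℝ) (hε₁ : 0 < ε₁) (hε₂ : 0 < ε₂) (hε₃ : 0 < ε₃)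
    (hlt : 2 * J * Real.exp (-2 * ε₁ ^ 2 * N)
            + 2 * J * Real.exp (-2 * ε₂ ^ 2 * N / V ^ 2)
            + 2 * J * Real.exp (-2 * ε₃ ^ 2 * N / V ^ 4) < 1) :
    ∃ z : Fin N → Fin J, ∀ i : Fin J,
      |(∑ n, (if z n = i then (1 : ℝ) else 0)) - ∑ n, aStar n i| ≤ ε₁ * N ∧
      |(∑ n, (if z n = i then (1 : ℝ) else 0) * x n)
          - ∑ n, aStar n i * x n| ≤ ε₂ * N ∧
      |(∑ n, (if z n = i then (1 : ℝ) else 0) * (x n - muStar i) ^ 2)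
          - ∑ n, aStar n i * (x n - muStar i) ^ 2| ≤ ε₃ * N := by
  have ha : ∀ n i, 0 ≤ aStar n i := fun n i => (haStar n i).1
  set P := randomScheme aStar ha hrow
  set bad : Fin J → Set (Fin N → Fin J) := fun i =>
    {z | ε₁ * N ≤ |(∑ n, (if z n = i then (1 : ℝ) else 0)) - ∑ n, aStar n i|} ∪
    {z | ε₂ * N ≤ |(∑ n, (if z n = i then (1 : ℝ) else 0) * x n)
          - ∑ n, aStar n i * x n|} ∪
    {z | ε₃ * N ≤ |(∑ n, (if z n = i then (1 : ℝ) else 0) * (x n - muStar i) ^ 2)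
          - ∑ n, aStar n i * (x n - muStar i) ^ 2|}
  have hbad : ∀ i, P.real (bad i) ≤ 2 * Real.exp (-2 * ε₁ ^ 2 * N)
      + 2 * Real.exp (-2 * ε₂ ^ 2 * N / V ^ 2) + 2 * Real.exp (-2 * ε₃ ^ 2 * N / V ^ 4) := by
    intro i
    have h₁ := measureReal_randomScheme_abs_sum_sub_ge_le aStar ha hrow i (c := fun _ => 1)
      (fun _ => ⟨zero_le_one, le_rfl⟩) hε₁.le
    have h₂ := measureReal_randomScheme_abs_sum_sub_ge_le aStar ha hrow i hx hε₂.le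
    have h₃ := measureReal_randomScheme_abs_sum_sub_ge_le aStar ha hrow i
      (fun n => hmuStar i ▸ sq_sub_weightedMean_mem_Icc (fun n => ha n i) hx n) hε₃.le
    simp only [Fintype.card_fin, mul_one, one_pow, div_one, ← pow_mul] at h₁ h₂ h₃
    exact (measureReal_union_le _ _).trans
      (add_le_add ((measureReal_union_le _ _).trans (add_le_add h₁ h₂)) h₃)
  have hbad_union : P.real (⋃ i, bad i) < 1 := by
    calc P.real (⋃ i, bad i) ≤ ∑ i, P.real (bad i) := measureReal_iUnion_fintype_le _
      _ ≤ _ := sum_le_sum fun i _ => hbad i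
      _ = 2 * J * Real.exp (-2 * ε₁ ^ 2 * N) + 2 * J * Real.exp (-2 * ε₂ ^ 2 * N / V ^ 2)
          + 2 * J * Real.exp (-2 * ε₃ ^ 2 * N / V ^ 4) := by
        rw [sum_const, card_univ, Fintype.card_fin, nsmul_eq_mul]
        ring
      _ < 1 := hlt
  obtain ⟨z, hz⟩ : (⋃ i, bad i)ᶜ.Nonempty := Set.nonempty_compl.2 fun h => by
    simp [h] at hbad_union
  simp only [Set.mem_compl_iff, Set.mem_iUnion, not_exists, Set.mem_union, Set.mem_ofPred_eq,
    not_or, not_le, bad] at hz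
  exact ⟨z, fun i => ⟨(hz i).1.1.le, (hz i).1.2.le, (hz i).2.le⟩⟩

/-- Paper's Corollary 2 (probabilistic method): if the failure-probability
bound of Theorem 1 is less than one, then there exists an integer
(ε₁,ε₂,ε₃)-typical classification scheme `z`. -/
theorem exists_typical_scheme
    (N J : ℕ) (hN : 0 < N) (hJ : 0 < J) (V : ℝ) (hV : 0 < V)
    (x : Fin N → ℝ) (hx : ∀ n, x n ∈ Set.Icc (0 : ℝ) V)
    (aStar : Fin N → Fin J → ℝ)
    (haStar : ∀ n i, aStar n i ∈ Set.Icc (0 : ℝ) 1)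
    (hrow : ∀ n, ∑ i, aStar n i = 1)
    (hcol : ∀ i, 0 < ∑ n, aStar n i)
    (muStar : Fin J → ℝ)
    (hmuStar : ∀ i, muStar i = (∑ n, aStar n i * x n) / (∑ n, aStar n i))
    (ε₁ ε₂ ε₃ : ℝ) (hε₁ : 0 < ε₁) (hε₂ : 0 < ε₂) (hε₃ : 0 < ε₃)
    (hlt : 2 * J * Real.exp (-2 * ε₁ ^ 2 * N)
            + 2 * J * Real.exp (-2 * ε₂ ^ 2 * N / V ^ 2)
            + 2 * J * Real.exp (-2 * ε₃ ^ 2 * N / V ^ 4) < 1) :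
    ∃ z : Fin N → Fin J, ∀ i : Fin J,
      |(∑ n, (if z n = i then (1 : ℝ) else 0)) - ∑ n, aStar n i| ≤ ε₁ * N ∧
      |(∑ n, (if z n = i then (1 : ℝ) else 0) * x n)
          - ∑ n, aStar n i * x n| ≤ ε₂ * N ∧
      |(∑ n, (if z n = i then (1 : ℝ) else 0) * (x n - muStar i) ^ 2)
          - ∑ n, aStar n i * (x n - muStar i) ^ 2| ≤ ε₃ * N :=
  exists_typical_scheme_general N J V x hx aStar haStar hrow muStar hmuStar ε₁ ε₂ ε₃ hε₁ hε₂ hε₃ hlt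
end
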